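/- arXiv:1005.3231 — 2 statements merged into one kernel-verified Lean document; each statement's English description precedes it below -/
import Mathlib

section
/- For real m ≥ 0 and natural number N with N! ≥ √(2πN)(N/e)^N and m ≤ N/(2e), the partial sum satisfies ∑_{ν=0}^{N} m^ν/ν! ≥ e^m · (1 − (em/N)^N · e^m/√(2πN)) ≥ (1/2)·e^m provided (em/N)^N e^m ≤ √(2πN)/2. -/
open Real Finset

lemma exp_eq_tsum_real (m : ℝ) : Real.exp m = ∑' n : ℕ, m ^ n / n.factorial := by
  rw [Real.exp_eq_exp_ℝ, NormedSpace.exp_eq_tsum_div]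

/-- Quantitative lower bound for partial exponential sums: if `m ≥ 0`, `N > 0`,
`N! ≥ √(2πN)·(N/e)^N`, `m ≤ N/(2e)` and `(em/N)^N·e^m ≤ √(2πN)/2`, then
`∑_{ν=0}^{N} m^ν/ν! ≥ e^m·(1 − (em/N)^N·e^m/√(2πN)) ≥ (1/2)·e^m`. -/
theorem partial_exp_sum_lower_bound (m : ℝ) (N : ℕ) (hm : 0 ≤ m) (hN : 0 < N)
    (hstir : Real.sqrt (2 * π * N) * ((N : ℝ) / Real.exp 1) ^ N ≤ (N.factorial : ℝ))
    (hmN : m ≤ (N : ℝ) / (2 * Real.exp 1))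
    (hsmall : (Real.exp 1 * m / N) ^ N * Real.exp m ≤ Real.sqrt (2 * π * N) / 2) :
    Real.exp m * (1 - (Real.exp 1 * m / N) ^ N * Real.exp m / Real.sqrt (2 * π * N)) ≤
        ∑ ν ∈ Finset.range (N + 1), m ^ ν / ν.factorial ∧
    (1 / 2) * Real.exp m ≤
      Real.exp m * (1 - (Real.exp 1 * m / N) ^ N * Real.exp m / Real.sqrt (2 * π * N)) := by
  have hNpos : (0 : ℝ) < N := Nat.cast_pos.mpr hN
  have hsqrt : 0 < Real.sqrt (2 * π * N) := by
    apply Real.sqrt_pos.mpr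
    positivity
  have hexppos := Real.exp_pos m
  have hsum : Summable (fun n : ℕ => m ^ n / n.factorial) :=
    Real.summable_pow_div_factorial m
  have hsplit := Summable.sum_add_tsum_nat_add (N + 1) hsum
  have hexp : Real.exp m = ∑' n : ℕ, m ^ n / n.factorial := exp_eq_tsum_real m
  -- tail bound
  have htailterm : ∀ j : ℕ, m ^ (j + (N + 1)) / ((j + (N + 1)).factorial : ℝ) ≤
      (m ^ N / N.factorial) * (m ^ (j + 1) / (j + 1).factorial) := by
    intro j
    have hfac : (N.factorial : ℝ) * ((j + 1).factorial : ℝ) ≤ ((j + (N + 1)).factorial : ℝ) := by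
      have := Nat.factorial_mul_factorial_dvd_factorial_add N (j + 1)
      have hle : N.factorial * (j + 1).factorial ≤ (N + (j + 1)).factorial :=
        Nat.le_of_dvd (Nat.factorial_pos _) this
      have : (N + (j + 1)) = j + (N + 1) := by ring
      rw [this] at hle
      exact_mod_cast hle
    have hpow : m ^ (j + (N + 1)) = m ^ N * m ^ (j + 1) := by
      rw [← pow_add]; ring_nf
    rw [hpow, div_mul_div_comm]
    apply div_le_div_of_nonneg_left (by positivity) (by positivity)
    · exact hfac
  have htail : ∑' j : ℕ, m ^ (j + (N + 1)) / ((j + (N + 1)).factorial : ℝ) ≤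
      (m ^ N / N.factorial) * Real.exp m := by
    have hs1 : Summable (fun j : ℕ => m ^ (j + (N + 1)) / ((j + (N + 1)).factorial : ℝ)) :=
      ((summable_nat_add_iff (f := fun n : ℕ => m ^ n / (n.factorial : ℝ)) (N + 1)).mpr hsum)
    have hs2 : Summable (fun j : ℕ => (m ^ N / N.factorial) * (m ^ (j + 1) / (j + 1).factorial)) :=
      (((summable_nat_add_iff (f := fun n : ℕ => m ^ n / (n.factorial : ℝ)) 1).mpr hsum)).mul_left _
    calc ∑' j : ℕ, m ^ (j + (N + 1)) / ((j + (N + 1)).factorial : ℝ)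
        ≤ ∑' j : ℕ, (m ^ N / N.factorial) * (m ^ (j + 1) / (j + 1).factorial) :=
          Summable.tsum_le_tsum htailterm hs1 hs2
      _ = (m ^ N / N.factorial) * ∑' j : ℕ, m ^ (j + 1) / ((j + 1).factorial : ℝ) := by
          rw [tsum_mul_left]
      _ ≤ (m ^ N / N.factorial) * Real.exp m := by
          apply mul_le_mul_of_nonneg_left _ (by positivity)
          rw [hexp]
          have h1 := Summable.sum_add_tsum_nat_add 1 hsum
          have hnn : 0 ≤ ∑ i ∈ Finset.range 1, m ^ i / (i.factorial : ℝ) := by positivity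
          linarith
  -- Stirling bound: m^N/N! ≤ (e m / N)^N / √(2πN)
  have hstir' : m ^ N / (N.factorial : ℝ) ≤ (Real.exp 1 * m / N) ^ N / Real.sqrt (2 * π * N) := by
    have hfacpos : (0 : ℝ) < N.factorial := by exact_mod_cast Nat.factorial_pos N
    have hNe : (0 : ℝ) < (N : ℝ) / Real.exp 1 := by positivity
    have hprod : 0 < Real.sqrt (2 * π * N) * ((N : ℝ) / Real.exp 1) ^ N := by positivity
    have key : (Real.exp 1 * m / N) ^ N / Real.sqrt (2 * π * N)
        = m ^ N / (Real.sqrt (2 * π * N) * ((N : ℝ) / Real.exp 1) ^ N) := by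
      rw [div_pow, div_pow, mul_pow]
      field_simp
    rw [key]
    exact div_le_div_of_nonneg_left (by positivity) hprod hstir
  have hX : (m ^ N / N.factorial) * Real.exp m ≤
      Real.exp m * ((Real.exp 1 * m / N) ^ N * Real.exp m / Real.sqrt (2 * π * N)) := by
    have h1 : (m ^ N / N.factorial) * Real.exp m ≤
        ((Real.exp 1 * m / N) ^ N / Real.sqrt (2 * π * N)) * Real.exp m :=
      mul_le_mul_of_nonneg_right hstir' hexppos.le
    have h2 : ((Real.exp 1 * m / N) ^ N / Real.sqrt (2 * π * N)) * Real.exp m ≤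
        Real.exp m * ((Real.exp 1 * m / N) ^ N * Real.exp m / Real.sqrt (2 * π * N)) := by
      have hone : (1 : ℝ) ≤ Real.exp m := Real.one_le_exp hm
      rw [div_mul_eq_mul_div, mul_comm (Real.exp m)]
      exact le_mul_of_one_le_right (by positivity) hone
    linarith
  constructor
  · have : Real.exp m - ∑ ν ∈ Finset.range (N + 1), m ^ ν / ν.factorial =
        ∑' j : ℕ, m ^ (j + (N + 1)) / ((j + (N + 1)).factorial : ℝ) := by
      rw [hexp, ← hsplit]; ring
    nlinarith [htail, hX]
  · have hX2 : (Real.exp 1 * m / N) ^ N * Real.exp m / Real.sqrt (2 * π * N) ≤ 1 / 2 := by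
      rw [div_le_iff₀ hsqrt]
      linarith
    nlinarith [mul_le_mul_of_nonneg_left hX2 hexppos.le]
end

section
/- Let d₀ > 2 be an integer. The number of plane rooted trees with s edges in which every vertex has at most d₀ children is at least (1 − (2s+1)·e^{−(d₀−2)ln(4/3)})·C(s), where C(s) is the s-th Catalan number. -/
/-!
Rotating plane trees into binary trees shows that there are `catalan s` plane trees with `s`
edges. A plane tree is determined by its Łukasiewicz code, the numbers of children of its `s + 1`
vertices in preorder, which sum to `s`. If some vertex has more than `d` children, lowering that
entry by `d + 1` leaves a weak composition of `s - d - 1` into `s + 1` parts, so at most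
`(s + 1) · C(2s - d - 1, s)` trees are bad. Since `C(m + 1, s) ≥ 2 C(m, s)` for `m < 2s`, this is
at most `(s + 1) C(2s, s) / 2^(d + 1) = (s + 1)² catalan s / 2^(d + 1)`, which is at most
`(2s + 1) (3/4)^(d - 2) catalan s` whenever `(2s + 1) (3/4)^(d - 2) < 1`; otherwise the bound is
trivial.
-/

inductive PlaneTree : Type
  | node : List PlaneTree → PlaneTree

def PlaneTree.numEdges : PlaneTree → ℕ
  | .node cs => cs.length + (cs.attach.map (fun t => t.1.numEdges)).sum
decreasing_by
  have := List.sizeOf_lt_of_mem t.2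
  simp only [PlaneTree.node.sizeOf_spec] at *
  omega

def PlaneTree.childrenLE (d : ℕ) : PlaneTree → Prop
  | .node cs => cs.length ≤ d ∧ ∀ t ∈ cs.attach, t.1.childrenLE d
decreasing_by
  have := List.sizeOf_lt_of_mem t.2
  simp only [PlaneTree.node.sizeOf_spec] at *
  omega

open Finset

instance finite_sum_eq_and {ι : Type*} [Fintype ι] (s : ℕ) (p : (ι → ℕ) → Prop) :
    Finite {f : ι → ℕ // ∑ i, f i = s ∧ p f} := by
  classical
  have := Finite.of_equiv _ (Sym.equivNatSumOfFintype ι s)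
  exact .of_equiv _ (Equiv.subtypeSubtypeEquivSubtypeInter (fun f : ι → ℕ => ∑ i, f i = s) p)

theorem Nat.card_sum_eq_and_exists_le_apply_le {ι : Type*} [Fintype ι] [DecidableEq ι]
    (s d : ℕ) :
    Nat.card {f : ι → ℕ // ∑ i, f i = s ∧ ∃ i, d ≤ f i} ≤
      Fintype.card ι * (Fintype.card ι).multichoose (s - d) := by
  choose idx hidx using fun f : {f : ι → ℕ // ∑ i, f i = s ∧ ∃ i, d ≤ f i} => f.2.2
  have single_le (f) : Pi.single (idx f) d ≤ f.1 := by
    intro j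
    rcases eq_or_ne j (idx f) with rfl | hj
    · simpa using hidx f
    · simp [hj]
  let lower (f : {f : ι → ℕ // ∑ i, f i = s ∧ ∃ i, d ≤ f i}) :
      ι × {g : ι → ℕ // ∑ i, g i = s - d} :=
    ⟨idx f, f.1 - Pi.single (idx f) d, by
      simp only [Pi.sub_apply]
      rw [sum_tsub_distrib _ fun j _ => single_le f j, sum_pi_single', if_pos (mem_univ _),
        f.2.1]⟩
  have lower_injective : Function.Injective lower := by
    rintro f g hfg
    simp only [lower, Prod.mk.injEq, Subtype.mk.injEq] at hfg
    obtain ⟨hi, hfg⟩ := hfg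
    rw [hi] at hfg
    exact Subtype.ext ((tsub_left_inj (hi ▸ single_le f) (single_le g)).1 hfg)
  calc _ ≤ Nat.card (ι × Sym ι (s - d)) :=
        Nat.card_le_card_of_injective _
          ((Equiv.prodCongr (.refl ι) (Sym.equivNatSumOfFintype ι _).symm).injective.comp
            lower_injective)
    _ = _ := by rw [Nat.card_prod, Sym.natCard_sym_eq_multichoose, Nat.card_eq_fintype_card]

namespace List

variable {l l' : List ℕ} {n : ℕ}

theorem sum_fin_getD (hl : l.length = n) : ∑ i : Fin n, l.getD i 0 = l.sum := by
  subst hl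
  simp [Fin.sum_univ_getElem]

theorem exists_fin_getD_eq_of_mem (hl : l.length = n) {a : ℕ} (ha : a ∈ l) :
    ∃ i : Fin n, l.getD i 0 = a := by
  obtain ⟨i, hi, rfl⟩ := getElem_of_mem ha
  exact ⟨⟨i, hl ▸ hi⟩, by simp [hi]⟩

theorem ext_fin_getD (hl : l.length = n) (hl' : l'.length = n)
    (h : ∀ i : Fin n, l.getD i 0 = l'.getD i 0) : l = l' :=
  ext_getElem (hl.trans hl'.symm) fun i hi hi' => by simpa [hi, hi'] using h ⟨i, hl ▸ hi⟩

end List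

theorem Nat.two_mul_choose_le_choose_succ {m k : ℕ} (h : m + 1 ≤ 2 * k) :
    2 * m.choose k ≤ (m + 1).choose k := by
  rcases lt_or_ge m k with hmk | hkm
  · simp [Nat.choose_eq_zero_of_lt hmk]
  · have key := Nat.choose_mul_succ_eq m k
    have hpos : 0 < m + 1 - k := by omega
    refine Nat.le_of_mul_le_mul_right ?_ hpos
    calc 2 * m.choose k * (m + 1 - k) = m.choose k * (2 * (m + 1 - k)) := by ring
      _ ≤ m.choose k * (m + 1) := Nat.mul_le_mul_left _ (by omega)
      _ = _ := key

theorem Nat.two_pow_mul_choose_le_centralBinom {s j : ℕ} (h : j ≤ s) :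
    2 ^ j * (2 * s - j).choose s ≤ s.centralBinom := by
  induction j with
  | zero => simp [Nat.centralBinom_eq_two_mul_choose]
  | succ j ih =>
    calc 2 ^ (j + 1) * (2 * s - (j + 1)).choose s
        = 2 ^ j * (2 * (2 * s - (j + 1)).choose s) := by ring
      _ ≤ 2 ^ j * (2 * s - (j + 1) + 1).choose s :=
          Nat.mul_le_mul_left _ (Nat.two_mul_choose_le_choose_succ (by omega))
      _ = 2 ^ j * (2 * s - j).choose s := by congr 2; omega
      _ ≤ _ := ih (by omega)

theorem catalan_eq_factorial_div (s : ℕ) :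
    (catalan s : ℝ) = (2 * s).factorial / (s.factorial * (s + 1).factorial) := by
  have h := congrArg (Nat.cast (R := ℝ)) (succ_mul_catalan_eq_centralBinom s)
  rw [Nat.centralBinom_eq_two_mul_choose, Nat.cast_choose ℝ (by omega : s ≤ 2 * s),
    show 2 * s - s = s by omega] at h
  rw [eq_div_iff (by positivity)] at h
  rw [eq_div_iff (by positivity), ← h, Nat.factorial_succ]
  push_cast
  ring

theorem Real.exp_neg_mul_log_four_div_three {d : ℕ} (hd : 2 ≤ d) :
    Real.exp (-((d : ℝ) - 2) * Real.log (4 / 3)) = (3 / 4) ^ (d - 2) := by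
  have : -((d : ℝ) - 2) * Real.log (4 / 3) = ((d - 2 : ℕ) : ℝ) * Real.log (3 / 4) := by
    rw [Nat.cast_sub hd, show (3 / 4 : ℝ) = (4 / 3)⁻¹ by norm_num, Real.log_inv]
    push_cast
    ring
  rw [this, Real.exp_nat_mul, Real.exp_log (by norm_num)]

theorem sq_succ_le_of_mul_pow_lt_one {s k : ℕ} (h : (2 * s + 1) * (3 / 4 : ℝ) ^ k < 1) :
    ((s : ℝ) + 1) ^ 2 ≤ 2 ^ (k + 3) * ((2 * s + 1) * (3 / 4) ^ k) := by
  have hlt : (2 * s + 1 : ℝ) < (4 / 3) ^ k := by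
    have : (4 / 3 : ℝ) ^ k * (3 / 4) ^ k = 1 := by rw [← mul_pow]; norm_num
    nlinarith [pow_pos (by norm_num : (0 : ℝ) < 4 / 3) k]
  have hle : (4 / 3 : ℝ) ^ k ≤ (3 / 2) ^ k := pow_le_pow_left₀ (by norm_num) (by norm_num) k
  have hpos : (0 : ℝ) < (3 / 2) ^ k := by positivity
  have heq : (2 : ℝ) ^ (k + 3) * (3 / 4) ^ k = 8 * (3 / 2) ^ k := by
    rw [pow_add, mul_right_comm, ← mul_pow]; norm_num; ring
  calc ((s : ℝ) + 1) ^ 2 ≤ (2 * s + 1) * (3 / 2) ^ k := by nlinarith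
    _ ≤ (2 * s + 1) * (8 * (3 / 2) ^ k) := by gcongr; linarith
    _ = _ := by rw [← heq]; ring

namespace PlaneTree

theorem numEdges_node (cs : List PlaneTree) :
    (node cs).numEdges = cs.length + (cs.map numEdges).sum := by
  rw [numEdges, List.attach_map_val (f := numEdges)]

theorem childrenLE_node (d : ℕ) (cs : List PlaneTree) :
    (node cs).childrenLE d ↔ cs.length ≤ d ∧ ∀ t ∈ cs, t.childrenLE d := by
  rw [childrenLE]
  exact and_congr Iff.rfl
    ⟨fun h t ht => h ⟨t, ht⟩ (List.mem_attach _ _), fun h t _ => h t.1 t.2⟩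

def forestToBinaryTree : List PlaneTree → BinaryTree Unit
  | [] => .nil
  | node ds :: cs => .node () (forestToBinaryTree ds) (forestToBinaryTree cs)

def _root_.BinaryTree.toPlaneForest : BinaryTree Unit → List PlaneTree
  | .nil => []
  | .node _ l r => node l.toPlaneForest :: r.toPlaneForest

theorem toPlaneForest_forestToBinaryTree (cs : List PlaneTree) :
    (forestToBinaryTree cs).toPlaneForest = cs := by
  induction cs using forestToBinaryTree.induct <;>
    simp [forestToBinaryTree, BinaryTree.toPlaneForest, *]

theorem forestToBinaryTree_toPlaneForest (b : BinaryTree Unit) :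
    forestToBinaryTree b.toPlaneForest = b := by
  induction b <;> simp [forestToBinaryTree, BinaryTree.toPlaneForest, *]

theorem numNodes_forestToBinaryTree (cs : List PlaneTree) :
    (forestToBinaryTree cs).numNodes = (cs.map numEdges).sum + cs.length := by
  induction cs using forestToBinaryTree.induct with
  | case1 => simp [forestToBinaryTree]
  | case2 ds cs ih₁ ih₂ =>
    simp only [forestToBinaryTree, BinaryTree.numNodes, ih₁, ih₂, List.map_cons, List.sum_cons,
      List.length_cons, numEdges_node]
    omega

/-- The rotation correspondence: the first child of a vertex becomes its left child and its
next sibling its right child. -/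
def equivBinaryTree : PlaneTree ≃ BinaryTree Unit where
  toFun | node cs => forestToBinaryTree cs
  invFun b := node b.toPlaneForest
  left_inv | node cs => by simp [toPlaneForest_forestToBinaryTree]
  right_inv b := forestToBinaryTree_toPlaneForest b

theorem numNodes_equivBinaryTree (t : PlaneTree) : (equivBinaryTree t).numNodes = t.numEdges := by
  obtain ⟨cs⟩ := t
  simp [equivBinaryTree, numNodes_forestToBinaryTree, numEdges_node, add_comm]

def equivTreesOfNumNodesEq (s : ℕ) :
    {t : PlaneTree // t.numEdges = s} ≃ BinaryTree.treesOfNumNodesEq s :=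
  equivBinaryTree.subtypeEquiv fun t => by
    rw [BinaryTree.mem_treesOfNumNodesEq, numNodes_equivBinaryTree]

instance (s : ℕ) : Finite {t : PlaneTree // t.numEdges = s} :=
  .of_equiv _ (equivTreesOfNumNodesEq s).symm

theorem card_numEdges_eq (s : ℕ) : Nat.card {t : PlaneTree // t.numEdges = s} = catalan s := by
  rw [Nat.card_congr (equivTreesOfNumNodesEq s), Nat.card_eq_finsetCard,
    BinaryTree.treesOfNumNodesEq_card_eq_catalan]


/-- The Łukasiewicz code of a forest. -/
def forestCode : List PlaneTree → List ℕ
  | [] => []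
  | node ds :: cs => ds.length :: (forestCode ds ++ forestCode cs)

theorem length_forestCode (cs : List PlaneTree) :
    (forestCode cs).length = (cs.map numEdges).sum + cs.length := by
  induction cs using forestCode.induct with
  | case1 => simp [forestCode]
  | case2 ds cs ih₁ ih₂ =>
    simp only [forestCode, ih₁, ih₂, List.length_cons, List.length_append, List.map_cons,
      List.sum_cons, numEdges_node]
    omega

theorem sum_forestCode (cs : List PlaneTree) :
    (forestCode cs).sum = (cs.map numEdges).sum := by
  induction cs using forestCode.induct with
  | case1 => simp [forestCode]
  | case2 ds cs ih₁ ih₂ =>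
    simp only [forestCode, ih₁, ih₂, List.sum_cons, List.sum_append, List.map_cons,
      numEdges_node]
    omega

/-- The code of a forest with a known number of trees is a prefix code. -/
theorem forestCode_append_inj {cs cs' : List PlaneTree} {r r' : List ℕ}
    (hlen : cs.length = cs'.length) (h : forestCode cs ++ r = forestCode cs' ++ r') :
    cs = cs' ∧ r = r' := by
  induction cs using forestCode.induct generalizing cs' r r' with
  | case1 =>
    obtain rfl : cs' = [] := List.length_eq_zero_iff.1 hlen.symm
    simpa [forestCode] using h
  | case2 ds cs ih₁ ih₂ =>
    obtain _ | ⟨⟨ds'⟩, cs'⟩ := cs'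
    · simp at hlen
    simp only [forestCode, List.cons_append, List.cons.injEq, List.append_assoc] at h
    obtain ⟨rfl, hcs⟩ := ih₁ h.1 h.2
    obtain ⟨rfl, rfl⟩ := ih₂ (by simpa using hlen) hcs
    exact ⟨rfl, rfl⟩

theorem forall_childrenLE_iff_forestCode (d : ℕ) (cs : List PlaneTree) :
    (∀ t ∈ cs, t.childrenLE d) ↔ ∀ a ∈ forestCode cs, a ≤ d := by
  induction cs using forestCode.induct with
  | case1 => simp [forestCode]
  | case2 ds cs ih₁ ih₂ =>
    simp only [forestCode, List.forall_mem_cons, List.forall_mem_append, childrenLE_node,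
      ih₁, ih₂, and_assoc]

def code (t : PlaneTree) : List ℕ := forestCode [t]

theorem length_code (t : PlaneTree) : t.code.length = t.numEdges + 1 := by
  simp [code, length_forestCode]

theorem sum_code (t : PlaneTree) : t.code.sum = t.numEdges := by
  simp [code, sum_forestCode]

theorem code_injective : Function.Injective code := fun t t' h => by
  simpa using (forestCode_append_inj (cs := [t]) (cs' := [t']) (r := []) (r' := []) rfl
    (by simpa [code] using h)).1

theorem childrenLE_iff_forall_mem_code (d : ℕ) (t : PlaneTree) :
    t.childrenLE d ↔ ∀ a ∈ t.code, a ≤ d := by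
  simpa [code] using forall_childrenLE_iff_forestCode d [t]


theorem le_numEdges_of_mem_code {t : PlaneTree} {a : ℕ} (ha : a ∈ t.code) : a ≤ t.numEdges :=
  sum_code t ▸ List.le_sum_of_mem ha

theorem card_not_childrenLE_le (s d : ℕ) :
    Nat.card {t : PlaneTree // t.numEdges = s ∧ ¬ t.childrenLE d} ≤
      (s + 1) * (s + 1).multichoose (s - (d + 1)) := by
  have length_code_eq {t : PlaneTree} (ht : t.numEdges = s) : t.code.length = s + 1 :=
    ht ▸ length_code t
  have exists_large {t : PlaneTree} (ht : t.numEdges = s ∧ ¬ t.childrenLE d) :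
      ∃ i : Fin (s + 1), d + 1 ≤ t.code.getD i 0 := by
    obtain ⟨a, ha, hda⟩ := not_forall₂.1 (mt (childrenLE_iff_forall_mem_code d t).2 ht.2)
    obtain ⟨i, rfl⟩ := List.exists_fin_getD_eq_of_mem (length_code_eq ht.1) ha
    exact ⟨i, by omega⟩
  let toFun (t : {t : PlaneTree // t.numEdges = s ∧ ¬ t.childrenLE d}) :
      {f : Fin (s + 1) → ℕ // ∑ i, f i = s ∧ ∃ i, d + 1 ≤ f i} :=
    ⟨fun i => t.1.code.getD i 0, (List.sum_fin_getD (length_code_eq t.2.1)).trans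
      ((sum_code t.1).trans t.2.1), exists_large t.2⟩
  have toFun_injective : Function.Injective toFun := fun t t' h =>
    Subtype.ext <| code_injective <| List.ext_fin_getD (length_code_eq t.2.1)
      (length_code_eq t'.2.1) (congrFun (congrArg Subtype.val h))
  simpa using (Nat.card_le_card_of_injective toFun toFun_injective).trans
    (Nat.card_sum_eq_and_exists_le_apply_le s (d + 1))

theorem two_pow_mul_card_not_childrenLE_le (s d : ℕ) :
    2 ^ (d + 1) * Nat.card {t : PlaneTree // t.numEdges = s ∧ ¬ t.childrenLE d} ≤
      (s + 1) * s.centralBinom := by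
  rcases lt_or_ge s (d + 1) with hsd | hds
  · have : IsEmpty {t : PlaneTree // t.numEdges = s ∧ ¬ t.childrenLE d} :=
      ⟨fun ⟨t, ht, hbad⟩ => hbad <| (childrenLE_iff_forall_mem_code d t).2 fun a ha => by
        have := le_numEdges_of_mem_code ha
        omega⟩
    simp
  · have hchoose : (s + 1).multichoose (s - (d + 1)) = (2 * s - (d + 1)).choose s := by
      rw [Nat.multichoose_eq, ← Nat.choose_symm (by omega)]
      congr 1 <;> omega
    calc 2 ^ (d + 1) * Nat.card {t : PlaneTree // t.numEdges = s ∧ ¬ t.childrenLE d}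
        ≤ 2 ^ (d + 1) * ((s + 1) * (2 * s - (d + 1)).choose s) :=
          Nat.mul_le_mul_left _ (hchoose ▸ card_not_childrenLE_le s d)
      _ = (s + 1) * (2 ^ (d + 1) * (2 * s - (d + 1)).choose s) := by ring
      _ ≤ (s + 1) * s.centralBinom :=
          Nat.mul_le_mul_left _ (Nat.two_pow_mul_choose_le_centralBinom hds)

theorem card_childrenLE_add_card_not_childrenLE (s d : ℕ) :
    Nat.card {t : PlaneTree // t.numEdges = s ∧ t.childrenLE d} +
      Nat.card {t : PlaneTree // t.numEdges = s ∧ ¬ t.childrenLE d} = catalan s := by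
  classical
  have e := Equiv.subtypeSubtypeEquivSubtypeInter (fun t : PlaneTree => t.numEdges = s)
  rw [← card_numEdges_eq s, ← Nat.card_congr (e _), ← Nat.card_congr (e _), ← Nat.card_sum]
  exact Nat.card_congr (Equiv.sumCompl _)

theorem card_not_childrenLE_le_mul_catalan (s : ℕ) {d : ℕ} (hd : 2 ≤ d) :
    (Nat.card {t : PlaneTree // t.numEdges = s ∧ ¬ t.childrenLE d} : ℝ) ≤
      (2 * s + 1) * (3 / 4) ^ (d - 2) * catalan s := by
  set B := Nat.card {t : PlaneTree // t.numEdges = s ∧ ¬ t.childrenLE d}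
  rcases le_or_gt 1 ((2 * s + 1) * (3 / 4 : ℝ) ^ (d - 2)) with hx | hx
  · have hB : B ≤ catalan s :=
      card_childrenLE_add_card_not_childrenLE s d ▸ Nat.le_add_left _ _
    calc (B : ℝ) ≤ catalan s := by exact_mod_cast hB
      _ ≤ _ := le_mul_of_one_le_left (by positivity) hx
  · have hB : (2 : ℝ) ^ (d + 1) * B ≤ ((s : ℝ) + 1) ^ 2 * catalan s := by
      rw [sq, mul_assoc]
      exact_mod_cast (two_pow_mul_card_not_childrenLE_le s d).trans_eq
        (by rw [← succ_mul_catalan_eq_centralBinom])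
    have hsq := sq_succ_le_of_mul_pow_lt_one hx
    rw [show d - 2 + 3 = d + 1 by omega] at hsq
    refine le_of_mul_le_mul_left ?_ (by positivity : (0 : ℝ) < 2 ^ (d + 1))
    calc _ ≤ ((s : ℝ) + 1) ^ 2 * catalan s := hB
      _ ≤ 2 ^ (d + 1) * ((2 * s + 1) * (3 / 4) ^ (d - 2)) * catalan s := by gcongr
      _ = _ := by ring

end PlaneTree

/-- Estimate (2.2): for an integer `d₀ > 2`, the number of plane rooted trees with `s` edges
in which every vertex has at most `d₀` children is at least
`(1 − (2s+1)·e^{−(d₀−2)·ln(4/3)})·C(s)`, where `C(s) = (2s)!/(s!·(s+1)!)` is the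
`s`-th Catalan number. -/
theorem card_bounded_degree_trees_lower_bound (s d₀ : ℕ) (hd₀ : 2 < d₀) :
    (1 - (2 * (s : ℝ) + 1) * Real.exp (-((d₀ : ℝ) - 2) * Real.log (4 / 3))) *
        (((2 * s).factorial : ℝ) / ((s.factorial : ℝ) * ((s + 1).factorial : ℝ))) ≤
      (Nat.card {t : PlaneTree // t.numEdges = s ∧ t.childrenLE d₀} : ℝ) := by
  rw [Real.exp_neg_mul_log_four_div_three hd₀.le, ← catalan_eq_factorial_div]
  have hsplit : (Nat.card {t : PlaneTree // t.numEdges = s ∧ t.childrenLE d₀} : ℝ) +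
      Nat.card {t : PlaneTree // t.numEdges = s ∧ ¬ t.childrenLE d₀} = catalan s := by
    exact_mod_cast PlaneTree.card_childrenLE_add_card_not_childrenLE s d₀
  have hbad := PlaneTree.card_not_childrenLE_le_mul_catalan s hd₀.le
  linarith
end
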